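/- arXiv:1908.06076 — 6 statements merged into one kernel-verified Lean document; each statement's English description precedes it below -/
import Mathlib

section
/- Let n ≥ 2 and let v be an n-dimensional unit vector of the form v = u/√2^q where u is a vector with integer entries and q ∈ ℕ is odd. Then there exist finitely many generators G₁, …, G_ℓ, each taken from the set {(-1)_[a], X_[a,b], (H⊗H)_[a,b,c,d] : a, b, c, d distinct elements of {1,…,n}} together with (when n is even) the matrix I_{n/2} ⊗ H, such that G₁ ⋯ G_ℓ v = (1/√2)(e₁ + e₂), where e₁ and e₂ are the first two standard basis vectors. -/
open Matrix Complex

noncomputable section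

/-- The `m`-level operator of type `W` with indices `f 0, …, f (m-1)`:
for injective `f`, its `(f j', f k')` entry is `W j' k'` and it agrees
with the identity matrix elsewhere. -/
def levelOp {n m : ℕ} (f : Fin m → Fin n) (W : Matrix (Fin m) (Fin m) ℂ) :
    Matrix (Fin n) (Fin n) ℂ := fun j k =>
  (∑ j' : Fin m, ∑ k' : Fin m, if f j' = j ∧ f k' = k then W j' k' else 0) +
  (if j = k ∧ ∀ j' : Fin m, f j' ≠ j then 1 else 0)

/-- The NOT gate `X`. -/
def Xmat : Matrix (Fin 2) (Fin 2) ℂ := !![0, 1; 1, 0]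

/-- The Hadamard gate `H`. -/
def Hmat : Matrix (Fin 2) (Fin 2) ℂ := (Real.sqrt 2 : ℂ)⁻¹ • !![1, 1; 1, -1]

/-- The Kronecker product `H ⊗ H`, a 4×4 matrix. -/
def HHmat : Matrix (Fin 4) (Fin 4) ℂ :=
  (2 : ℂ)⁻¹ • !![1, 1, 1, 1; 1, -1, 1, -1; 1, 1, -1, -1; 1, -1, -1, 1]

/-- `G` is one of the generators `(-1)_[a]`, `X_[a,b]`, `(H⊗H)_[a,b,c,d]`
with `a, b, c, d` distinct. -/
def IsIntGen {n : ℕ} (G : Matrix (Fin n) (Fin n) ℂ) : Prop :=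
  (∃ a : Fin n, G = levelOp ![a] !![-1]) ∨
  (∃ a b : Fin n, a ≠ b ∧ G = levelOp ![a, b] Xmat) ∨
  (∃ a b c d : Fin n, a ≠ b ∧ a ≠ c ∧ a ≠ d ∧ b ≠ c ∧ b ≠ d ∧ c ≠ d ∧
    G = levelOp ![a, b, c, d] HHmat)

/-- The matrix `I_{n/2} ⊗ H` (meaningful when `n` is even): block diagonal
with `H` blocks on consecutive pairs of indices. -/
def IHmat (n : ℕ) : Matrix (Fin n) (Fin n) ℂ := fun j k =>
  if (j : ℕ) / 2 = (k : ℕ) / 2 then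
    Hmat ⟨(j : ℕ) % 2, Nat.mod_lt _ (by norm_num)⟩
         ⟨(k : ℕ) % 2, Nat.mod_lt _ (by norm_num)⟩
  else 0

/-- `G` is one of the generators `(-1)_[a]`, `X_[a,b]`, `(H⊗H)_[a,b,c,d]`,
or (when `n` is even) `I_{n/2} ⊗ H`. -/
def IsIntGenH {n : ℕ} (G : Matrix (Fin n) (Fin n) ℂ) : Prop :=
  IsIntGen G ∨ (Even n ∧ G = IHmat n)

/-!
Write `v = u / √2^q` with `∑ uₖ² = 2^q`. Since an odd square is `1 (mod 4)`, the number of odd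
entries of `u` is `≡ 2^q (mod 4)`, hence a multiple of four as long as `q ≥ 3`. After sign flips
making four odd entries `≡ 1 (mod 4)`, the gate `(H⊗H)` on them produces an integer vector, still
over `√2^q`, in which these four entries are even. Repeating this makes all entries even, and then
`u / √2^q = (u/2) / √2^(q-2)`. When `q = 1`, `u` has exactly two nonzero entries, both `±1`, and
sign flips followed by a permutation (a product of gates `X`) bring `v` to `(e₁ + e₂)/√2`.
-/

open Finset

section
variable {n m : ℕ}

lemma levelOp_mulVec_apply_of_injective {f : Fin m → Fin n} (hf : Function.Injective f)
    (W : Matrix (Fin m) (Fin m) ℂ) (x : Fin n → ℂ) (i : Fin m) :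
    (levelOp f W *ᵥ x) (f i) = ∑ j, W i j * x (f j) := by
  simp only [mulVec, dotProduct, levelOp, hf.eq_iff, ite_and, sum_ite_irrel, sum_const_zero,
    sum_ite_eq', mem_univ, ↓reduceIte, ne_eq, forall_eq, and_false, add_zero, sum_mul, ite_mul,
    zero_mul]
  rw [Finset.sum_comm]
  simp

lemma levelOp_mulVec_apply_of_forall_ne (f : Fin m → Fin n) (W : Matrix (Fin m) (Fin m) ℂ)
    (x : Fin n → ℂ) {k : Fin n} (hk : ∀ i, f i ≠ k) :
    (levelOp f W *ᵥ x) k = x k := by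
  simp [levelOp, mulVec, dotProduct, hk]

lemma levelOp_neg_one_mulVec (a : Fin n) (x : Fin n → ℂ) :
    levelOp ![a] !![-1] *ᵥ x = Function.update x a (-x a) := by
  funext k
  by_cases hk : k = a
  · subst hk
    simpa using levelOp_mulVec_apply_of_injective (f := ![k])
      (Function.injective_of_subsingleton _) !![-1] x 0
  · rw [Function.update_of_ne hk]
    exact levelOp_mulVec_apply_of_forall_ne _ _ _ (by simp [Ne.symm hk])

lemma levelOp_X_mulVec {a b : Fin n} (hab : a ≠ b) (x : Fin n → ℂ) :
    levelOp ![a, b] Xmat *ᵥ x = x ∘ Equiv.swap a b := by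
  have hf : Function.Injective ![a, b] := by
    intro i j; fin_cases i <;> fin_cases j <;> simp [hab, hab.symm]
  funext k
  rcases eq_or_ne k a with rfl | hka
  · simpa [Xmat] using levelOp_mulVec_apply_of_injective hf Xmat x 0
  rcases eq_or_ne k b with rfl | hkb
  · simpa [Xmat] using levelOp_mulVec_apply_of_injective hf Xmat x 1
  rw [Function.comp_apply, Equiv.swap_apply_of_ne_of_ne hka hkb]
  exact levelOp_mulVec_apply_of_forall_ne _ _ _ (by simp [Fin.forall_fin_two, hka.symm, hkb.symm])

/-- `y` is `(H ⊗ H)_[a,b,c,d] x`, with the factor `1/2` moved to the left so that the relation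
also makes sense for integer vectors. -/
structure IsHadamardImage {R : Type*} [Ring R] (a b c d : Fin n) (x y : Fin n → R) :
    Prop where
  apply_a : 2 * y a = x a + x b + x c + x d
  apply_b : 2 * y b = x a - x b + x c - x d
  apply_c : 2 * y c = x a + x b - x c - x d
  apply_d : 2 * y d = x a - x b - x c + x d
  apply_of_ne : ∀ k, k ≠ a → k ≠ b → k ≠ c → k ≠ d → y k = x k

lemma levelOp_HH_mulVec {a b c d : Fin n} (hab : a ≠ b) (hac : a ≠ c) (had : a ≠ d)
    (hbc : b ≠ c) (hbd : b ≠ d) (hcd : c ≠ d) {x y : Fin n → ℂ}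
    (h : IsHadamardImage a b c d x y) : levelOp ![a, b, c, d] HHmat *ᵥ x = y := by
  have hf : Function.Injective ![a, b, c, d] := by
    intro i j; fin_cases i <;> fin_cases j <;> simp [*, Ne.symm]
  have row (i : Fin 4) := levelOp_mulVec_apply_of_injective hf HHmat x i
  simp only [Fin.sum_univ_four] at row
  funext k
  rcases eq_or_ne k a with rfl | hka
  · refine (row 0).trans ?_
    simp only [HHmat, Matrix.smul_apply, of_apply, Matrix.cons_val, smul_eq_mul]
    linear_combination (-1/2 : ℂ) * h.apply_a
  rcases eq_or_ne k b with rfl | hkb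
  · refine (row 1).trans ?_
    simp only [HHmat, Matrix.smul_apply, of_apply, Matrix.cons_val, smul_eq_mul]
    linear_combination (-1/2 : ℂ) * h.apply_b
  rcases eq_or_ne k c with rfl | hkc
  · refine (row 2).trans ?_
    simp only [HHmat, Matrix.smul_apply, of_apply, Matrix.cons_val, smul_eq_mul]
    linear_combination (-1/2 : ℂ) * h.apply_c
  rcases eq_or_ne k d with rfl | hkd
  · refine (row 3).trans ?_
    simp only [HHmat, Matrix.smul_apply, of_apply, Matrix.cons_val, smul_eq_mul]
    linear_combination (-1/2 : ℂ) * h.apply_d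
  rw [h.apply_of_ne k hka hkb hkc hkd]
  exact levelOp_mulVec_apply_of_forall_ne _ _ _ (by simp [Fin.forall_fin_succ, *, Ne.symm])

def IntGenReachable (x y : Fin n → ℂ) : Prop :=
  ∃ L : List (Matrix (Fin n) (Fin n) ℂ), (∀ G ∈ L, IsIntGen G) ∧ L.prod *ᵥ x = y

namespace IntGenReachable
variable {x y z : Fin n → ℂ}

lemma refl (x : Fin n → ℂ) : IntGenReachable x x := ⟨[], by simp, by simp⟩

lemma trans (hxy : IntGenReachable x y) (hyz : IntGenReachable y z) : IntGenReachable x z := by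
  obtain ⟨L₁, hL₁, rfl⟩ := hxy
  obtain ⟨L₂, hL₂, rfl⟩ := hyz
  refine ⟨L₂ ++ L₁, fun G hG => ?_, by rw [List.prod_append, mulVec_mulVec]⟩
  rcases List.mem_append.mp hG with hG | hG
  exacts [hL₂ G hG, hL₁ G hG]

lemma of_isIntGen {G : Matrix (Fin n) (Fin n) ℂ} (hG : IsIntGen G) (x : Fin n → ℂ) :
    IntGenReachable x (G *ᵥ x) :=
  ⟨[G], by simpa using hG, by simp⟩

lemma piecewise_neg (s : Finset (Fin n)) (x : Fin n → ℂ) :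
    IntGenReachable x (s.piecewise (-x) x) := by
  classical
  induction s using Finset.induction_on with
  | empty => simpa using refl x
  | insert a s ha ih =>
    refine ih.trans ?_
    have hxa : s.piecewise (-x) x a = x a := Finset.piecewise_eq_of_notMem _ _ _ ha
    rw [Finset.piecewise_insert, Pi.neg_apply, ← hxa, ← levelOp_neg_one_mulVec]
    exact of_isIntGen (.inl ⟨a, rfl⟩) _

lemma of_forall_eq_or_eq_neg (h : ∀ k, y k = x k ∨ y k = -x k) : IntGenReachable x y := by
  classical
  convert piecewise_neg {k | y k ≠ x k} x using 1
  funext k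
  by_cases hk : y k = x k
  · simp [hk]
  · simpa [hk] using (h k).resolve_left hk

lemma comp_perm (σ : Equiv.Perm (Fin n)) (x : Fin n → ℂ) : IntGenReachable x (x ∘ σ) := by
  induction σ using Equiv.Perm.swap_induction_on' with
  | one => exact refl x
  | mul_swap σ a b hab ih =>
    rw [Equiv.Perm.coe_mul, ← Function.comp_assoc, ← levelOp_X_mulVec hab]
    exact ih.trans (of_isIntGen (.inr (.inl ⟨a, b, hab, rfl⟩)) _)

lemma of_isHadamardImage {a b c d : Fin n} (hab : a ≠ b) (hac : a ≠ c) (had : a ≠ d)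
    (hbc : b ≠ c) (hbd : b ≠ d) (hcd : c ≠ d) (h : IsHadamardImage a b c d x y) :
    IntGenReachable x y :=
  levelOp_HH_mulVec hab hac had hbc hbd hcd h ▸
    of_isIntGen (.inr (.inr ⟨a, b, c, d, hab, hac, had, hbc, hbd, hcd, rfl⟩)) x

end IntGenReachable

def scaledVec {ι : Type*} (q : ℕ) (u : ι → ℤ) : ι → ℂ :=
  fun k => u k / (Real.sqrt 2 : ℂ) ^ q

lemma scaledVec_two_mul {ι : Type*} (q : ℕ) (u : ι → ℤ) :
    scaledVec (q + 2) (fun k => 2 * u k) = scaledVec q u := by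
  have h2 : (Real.sqrt 2 : ℂ) ^ 2 = 2 := by
    rw [← Complex.ofReal_pow, Real.sq_sqrt zero_le_two, Complex.ofReal_ofNat]
  have hs : (Real.sqrt 2 : ℂ) ^ q ≠ 0 := by simp
  funext k
  simp only [scaledVec, pow_add, h2]
  push_cast
  field_simp

lemma IsHadamardImage.map_scaledVec {a b c d : Fin n} {w y : Fin n → ℤ}
    (h : IsHadamardImage a b c d w y) (q : ℕ) :
    IsHadamardImage a b c d (scaledVec q w) (scaledVec q y) := by
  have hs : (Real.sqrt 2 : ℂ) ^ q ≠ 0 := by simp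
  constructor
  · simp only [scaledVec]; field_simp; exact_mod_cast h.apply_a
  · simp only [scaledVec]; field_simp; exact_mod_cast h.apply_b
  · simp only [scaledVec]; field_simp; exact_mod_cast h.apply_c
  · simp only [scaledVec]; field_simp; exact_mod_cast h.apply_d
  · intro k hka hkb hkc hkd
    simp only [scaledVec, h.apply_of_ne k hka hkb hkc hkd]

lemma IsHadamardImage.sum_sq_eq {a b c d : Fin n} (hab : a ≠ b) (hac : a ≠ c)
    (had : a ≠ d) (hbc : b ≠ c) (hbd : b ≠ d) (hcd : c ≠ d) {w y : Fin n → ℤ}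
    (h : IsHadamardImage a b c d w y) : ∑ k, y k ^ 2 = ∑ k, w k ^ 2 := by
  rw [← sub_eq_zero, ← Finset.sum_sub_distrib,
    ← Finset.sum_subset (subset_univ {a, b, c, d}) fun k _ hk => ?_]
  · rw [Finset.sum_insert (by simp [hab, hac, had]), Finset.sum_insert (by simp [hbc, hbd]),
      Finset.sum_insert (by simp [hcd]), Finset.sum_singleton]
    have : (4 : ℤ) * ((y a ^ 2 - w a ^ 2) + ((y b ^ 2 - w b ^ 2) + ((y c ^ 2 - w c ^ 2) +
        (y d ^ 2 - w d ^ 2)))) = 0 := by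
      linear_combination (2 * y a + w a + w b + w c + w d) * h.apply_a +
        (2 * y b + w a - w b + w c - w d) * h.apply_b +
        (2 * y c + w a + w b - w c - w d) * h.apply_c +
        (2 * y d + w a - w b - w c + w d) * h.apply_d
    linarith
  · simp only [mem_insert, mem_singleton, not_or] at hk
    rw [h.apply_of_ne k hk.1 hk.2.1 hk.2.2.1 hk.2.2.2, sub_self]

lemma exists_isHadamardImage_even {a b c d : Fin n} (hab : a ≠ b) (hac : a ≠ c)
    (had : a ≠ d) (hbc : b ≠ c) (hbd : b ≠ d) (hcd : c ≠ d) (w : Fin n → ℤ)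
    (ha : w a % 4 = 1) (hb : w b % 4 = 1) (hc : w c % 4 = 1) (hd : w d % 4 = 1) :
    ∃ y, IsHadamardImage a b c d w y ∧
      ∀ k ∈ ({a, b, c, d} : Finset (Fin n)), Even (y k) := by
  set y : Fin n → ℤ := fun k =>
    if k = a then (w a + w b + w c + w d) / 2
    else if k = b then (w a - w b + w c - w d) / 2
    else if k = c then (w a + w b - w c - w d) / 2
    else if k = d then (w a - w b - w c + w d) / 2
    else w k
  have hya : y a = (w a + w b + w c + w d) / 2 := by simp [y]
  have hyb : y b = (w a - w b + w c - w d) / 2 := by simp [y, hab.symm]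
  have hyc : y c = (w a + w b - w c - w d) / 2 := by simp [y, hac.symm, hbc.symm]
  have hyd : y d = (w a - w b - w c + w d) / 2 := by simp [y, had.symm, hbd.symm, hcd.symm]
  refine ⟨y, ⟨?_, ?_, ?_, ?_, fun k hka hkb hkc hkd => by simp [y, *]⟩, ?_⟩
  · omega
  · omega
  · omega
  · omega
  · simp only [mem_insert, mem_singleton, Int.even_iff]
    rintro k (rfl | rfl | rfl | rfl) <;> omega

lemma card_odd_modEq_sum_sq {ι : Type*} [Fintype ι] (u : ι → ℤ) :
    (#{k | Odd (u k)} : ℤ) ≡ ∑ k, u k ^ 2 [ZMOD 4] := by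
  classical
  rw [Finset.natCast_card_filter]
  refine Int.ModEq.sum fun k _ => ?_
  rw [Int.modEq_iff_dvd]
  split_ifs with hk
  · obtain ⟨m, hm⟩ := hk
    exact ⟨m ^ 2 + m, by rw [hm]; ring⟩
  · obtain ⟨m, hm⟩ := Int.not_odd_iff_even.mp hk
    exact ⟨m ^ 2, by rw [hm]; ring⟩

lemma exists_reachable_clear_four_odd (q : ℕ) (u : Fin n → ℤ) {t : Finset (Fin n)}
    (ht : t ⊆ ({k | Odd (u k)} : Finset (Fin n))) (ht4 : #t = 4) :
    ∃ u' : Fin n → ℤ, ∑ k, u' k ^ 2 = ∑ k, u k ^ 2 ∧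
      ({k | Odd (u' k)} : Finset (Fin n)) = ({k | Odd (u k)} : Finset (Fin n)) \ t ∧
      IntGenReachable (scaledVec q u) (scaledVec q u') := by
  obtain ⟨a, b, c, d, hab, hac, had, hbc, hbd, hcd, rfl⟩ := card_eq_four.mp ht4
  have hodd : ∀ k ∈ ({a, b, c, d} : Finset (Fin n)), u k % 4 = 1 ∨ u k % 4 = 3 := by
    intro k hk
    have := Int.odd_iff.mp (by simpa using ht hk)
    omega
  -- Flipping every entry `≡ 3 (mod 4)` makes the four chosen odd entries `≡ 1 (mod 4)`, so that
  -- all four Hadamard combinations of them are divisible by `4`.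
  set w : Fin n → ℤ := fun k => if u k % 4 = 3 then -u k else u k
  have hw_sign : ∀ k, w k = u k ∨ w k = -u k := fun k => by
    by_cases h : u k % 4 = 3 <;> simp [w, h]
  have hw_mod : ∀ k ∈ ({a, b, c, d} : Finset (Fin n)), w k % 4 = 1 := fun k hk => by
    have := hodd k hk
    by_cases h : u k % 4 = 3 <;> simp only [w, h, if_true, if_false] <;> omega
  obtain ⟨y, hy, hy_even⟩ := exists_isHadamardImage_even hab hac had hbc hbd hcd w
    (hw_mod a (by simp)) (hw_mod b (by simp)) (hw_mod c (by simp)) (hw_mod d (by simp))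
  refine ⟨y, ?_, ?_, ?_⟩
  · rw [hy.sum_sq_eq hab hac had hbc hbd hcd]
    exact sum_congr rfl fun k _ => by rcases hw_sign k with h | h <;> rw [h]; ring
  · ext k
    by_cases hk : k ∈ ({a, b, c, d} : Finset (Fin n))
    · simp only [mem_sdiff, hk, not_true_eq_false, and_false, iff_false, mem_filter, mem_univ,
        true_and]
      exact Int.not_odd_iff_even.mpr (hy_even k hk)
    · simp only [mem_insert, mem_singleton, not_or] at hk
      simp only [mem_sdiff, mem_filter, mem_univ, true_and, mem_insert, mem_singleton, hk,
        or_self, not_false_eq_true, and_true, hy.apply_of_ne k hk.1 hk.2.1 hk.2.2.1 hk.2.2.2]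
      rcases hw_sign k with h | h <;> simp [h]
  · refine (IntGenReachable.of_forall_eq_or_eq_neg fun k => ?_).trans
      (.of_isHadamardImage hab hac had hbc hbd hcd (hy.map_scaledVec q))
    rcases hw_sign k with h | h <;> simp [scaledVec, h, neg_div]

lemma exists_reachable_even {q : ℕ} (hq : 2 ≤ q) (u : Fin n → ℤ)
    (hu : ∑ k, u k ^ 2 = 2 ^ q) :
    ∃ u' : Fin n → ℤ, (∀ k, Even (u' k)) ∧ ∑ k, u' k ^ 2 = 2 ^ q ∧
      IntGenReachable (scaledVec q u) (scaledVec q u') := by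
  induction hN : #({k | Odd (u k)} : Finset (Fin n)) using Nat.strong_induction_on generalizing u
    with | _ N ih =>
  rcases Nat.eq_zero_or_pos N with rfl | hpos
  · exact ⟨u, by simpa using card_eq_zero.mp hN, hu, .refl _⟩
  have h4 : 4 ∣ N := by
    obtain ⟨m, hm⟩ : (4 : ℤ) ∣ 2 ^ q := by simpa using pow_dvd_pow (2 : ℤ) hq
    have := (card_odd_modEq_sum_sq u).dvd
    rw [hu, hm, hN] at this
    omega
  obtain ⟨t, ht, ht4⟩ :=
    exists_subset_card_eq (show 4 ≤ #({k | Odd (u k)} : Finset (Fin n)) by omega)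
  obtain ⟨u', hsum, hodd, hreach⟩ := exists_reachable_clear_four_odd q u ht ht4
  obtain ⟨u'', heven, hsum', hreach'⟩ := ih (N - 4) (by omega) u' (hsum.trans hu)
    (by rw [hodd, card_sdiff_of_subset ht, ht4, hN])
  exact ⟨u'', heven, hsum', hreach.trans hreach'⟩

lemma reachable_of_sum_sq_eq_two (hn : 2 ≤ n) (u : Fin n → ℤ)
    (hu : ∑ k, u k ^ 2 = 2) :
    IntGenReachable (scaledVec 1 u) fun k =>
      if k = ⟨0, by omega⟩ ∨ k = ⟨1, by omega⟩ then (Real.sqrt 2 : ℂ)⁻¹ else 0 := by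
  set S : Finset (Fin n) := {k | u k ≠ 0}
  have habs : ∀ k, |u k| = if k ∈ S then 1 else 0 := by
    intro k
    have : u k ^ 2 ≤ 2 := hu ▸ single_le_sum (fun i _ => sq_nonneg (u i)) (mem_univ k)
    have : |u k| ≤ 1 := by nlinarith [sq_abs (u k), abs_nonneg (u k)]
    by_cases hk : u k = 0
    · simp [S, hk]
    · have := abs_pos.mpr hk
      rw [if_pos (by simpa [S] using hk)]
      omega
  have hS : #S = 2 := by
    have : ∑ k, u k ^ 2 = #S := by simp_rw [← sq_abs (u _), habs]; simp
    omega
  set T : Finset (Fin n) := {⟨0, by omega⟩, ⟨1, by omega⟩}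
  obtain ⟨σ, hσ⟩ :=
    Equiv.Perm.exists_map_finset_eq T S (by rw [hS, card_pair (by simp [Fin.ext_iff])])
  have hperm : (scaledVec 1 fun k => |u k|) ∘ σ = fun k =>
      if k = ⟨0, by omega⟩ ∨ k = ⟨1, by omega⟩ then (Real.sqrt 2 : ℂ)⁻¹ else 0 := by
    funext k
    have hσk : σ k ∈ S ↔ k = ⟨0, by omega⟩ ∨ k = ⟨1, by omega⟩ := by
      rw [← hσ, mem_map_equiv]; simp [T]
    simp only [Function.comp_apply, scaledVec, habs, hσk]
    split_ifs <;> simp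
  refine (IntGenReachable.of_forall_eq_or_eq_neg fun k => ?_).trans
    (hperm ▸ IntGenReachable.comp_perm σ _)
  rcases abs_choice (u k) with h | h <;> simp [scaledVec, h, neg_div]

lemma reachable_of_sum_sq_eq_two_pow (hn : 2 ≤ n) (m : ℕ) (u : Fin n → ℤ)
    (hu : ∑ k, u k ^ 2 = 2 ^ (2 * m + 1)) :
    IntGenReachable (scaledVec (2 * m + 1) u) fun k =>
      if k = ⟨0, by omega⟩ ∨ k = ⟨1, by omega⟩ then (Real.sqrt 2 : ℂ)⁻¹ else 0 := by
  induction m generalizing u with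
  | zero => exact reachable_of_sum_sq_eq_two hn u hu
  | succ m ih =>
    rw [show 2 * (m + 1) + 1 = 2 * m + 1 + 2 by ring] at hu ⊢
    obtain ⟨u', heven, hsum, hreach⟩ := exists_reachable_even (by omega) u hu
    have hhalf : (fun k => 2 * (u' k / 2)) = u' :=
      funext fun k => Int.two_mul_ediv_two_of_even (heven k)
    rw [← hhalf, scaledVec_two_mul] at hreach
    refine hreach.trans (ih _ ?_)
    rw [← hhalf, pow_add] at hsum
    simp only [mul_pow, ← Finset.mul_sum] at hsum
    linarith

lemma sum_conj_mul_scaledVec {ι : Type*} [Fintype ι] (q : ℕ) (u : ι → ℤ) :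
    ∑ k, starRingEnd ℂ (scaledVec q u k) * scaledVec q u k =
      ((∑ k, u k ^ 2 : ℤ) : ℂ) / 2 ^ q := by
  have h2 : ((Real.sqrt 2 : ℂ) ^ q) ^ 2 = 2 ^ q := by
    rw [← pow_mul, mul_comm, pow_mul, ← Complex.ofReal_pow, Real.sq_sqrt zero_le_two,
      Complex.ofReal_ofNat]
  simp only [scaledVec, map_div₀, map_intCast, map_pow, Complex.conj_ofReal, Int.cast_sum,
    Int.cast_pow, Finset.sum_div, ← h2]
  exact Finset.sum_congr rfl fun k _ => by ring

end

/-- A unit vector of the form `u/√2^q` with `u` an integer vector and `q` odd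
can be reduced to `(1/√2)(e₁ + e₂)` using the generators `(-1)_[a]`,
`X_[a,b]`, `(H⊗H)_[a,b,c,d]`, and (when `n` is even) `I_{n/2} ⊗ H`. -/
theorem stmt10 (n : ℕ) (hn : 2 ≤ n) (v : Fin n → ℂ)
    (hunit : ∑ k, (starRingEnd ℂ) (v k) * v k = 1)
    (u : Fin n → ℤ) (q : ℕ) (hq : Odd q)
    (hv : ∀ k, v k = (u k : ℂ) / (Real.sqrt 2 : ℂ) ^ q) :
    ∃ L : List (Matrix (Fin n) (Fin n) ℂ),
      (∀ G ∈ L, IsIntGenH G) ∧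
      L.prod.mulVec v = fun k =>
        if k = (⟨0, by omega⟩ : Fin n) ∨ k = (⟨1, by omega⟩ : Fin n) then
          ((Real.sqrt 2 : ℂ))⁻¹ else 0 := by
  obtain rfl : v = scaledVec q u := funext hv
  have hsum : ∑ k, u k ^ 2 = 2 ^ q := by
    rw [sum_conj_mul_scaledVec, div_eq_one_iff_eq (by simp)] at hunit
    exact_mod_cast hunit
  obtain ⟨m, rfl⟩ := hq
  obtain ⟨L, hL, hLv⟩ := reachable_of_sum_sq_eq_two_pow hn m u hsum
  exact ⟨L, fun G hG => .inl (hL G hG), hLv⟩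
end
end

section
/- There is no unitary matrix V of odd dimension n such that V = W/√2^q for some matrix W with integer entries and some odd natural number q. -/
open Matrix Complex

/-!
A unitary matrix has a determinant of modulus one. If `V = W / √2^q` with `W` an `n × n` integer
matrix, then `det V = det W / √2^(qn)`, so `(det W)^2 = 2^(qn)`. When `q` and `n` are odd this
exhibits an odd power of `2` as the square of an integer, which is impossible.
-/

theorem Int.sq_ne_prime_pow_of_odd {p m : ℕ} (hp : p.Prime) (hm : Odd m) (z : ℤ) :
    z ^ 2 ≠ (p : ℤ) ^ m := by
  intro h
  have hnat : z.natAbs ^ 2 = p ^ m := by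
    simpa [Int.natAbs_pow] using congrArg Int.natAbs h
  have hval := congrArg (fun k => k.factorization p) hnat
  simp only [Nat.factorization_pow, Finsupp.smul_apply, smul_eq_mul, hp.factorization_self,
    mul_one] at hval
  rw [Nat.odd_iff] at hm
  omega

theorem Matrix.det_eq_intCast_det_div_pow {R : Type*} [Field R] {n : Type*} [Fintype n]
    [DecidableEq n] {V : Matrix n n R} {W : Matrix n n ℤ} {c : R}
    (h : ∀ j k, V j k = (W j k : R) / c) : V.det = (W.det : R) / c ^ Fintype.card n := by
  have hV : V = c⁻¹ • W.map (Int.cast : ℤ → R) := by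
    ext j k
    simp [h j k, div_eq_inv_mul]
  rw [hV, det_smul, inv_pow, div_eq_inv_mul]
  exact congrArg _ (RingHom.map_det (Int.castRingHom R) W).symm

theorem Int.sq_eq_two_pow_of_norm_div_sqrt_two_pow_eq_one {d : ℤ} {m : ℕ}
    (h : ‖(d : ℂ) / (Real.sqrt 2 : ℂ) ^ m‖ = 1) : d ^ 2 = 2 ^ m := by
  have hpos : 0 < Real.sqrt 2 ^ m := by positivity
  rw [norm_div, norm_pow, Complex.norm_real, Real.norm_of_nonneg (Real.sqrt_nonneg 2),
    Complex.norm_intCast, div_eq_one_iff_eq hpos.ne'] at h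
  have hreal : (d : ℝ) ^ 2 = 2 ^ m := by
    rw [← sq_abs, h, ← pow_mul, mul_comm, pow_mul, Real.sq_sqrt zero_le_two]
  exact_mod_cast hreal

/-- There is no unitary matrix of odd dimension `n` of the form `W/√2^q` with
`W` an integer matrix and `q` odd. -/
theorem stmt11 (n : ℕ) (hn : Odd n) (V : Matrix (Fin n) (Fin n) ℂ)
    (hV : V ∈ Matrix.unitaryGroup (Fin n) ℂ) :
    ¬ ∃ (W : Matrix (Fin n) (Fin n) ℤ) (q : ℕ), Odd q ∧
        ∀ j k, V j k = (W j k : ℂ) / (Real.sqrt 2 : ℂ) ^ q := by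
  rintro ⟨W, q, hq, hVW⟩
  have hdet := det_eq_intCast_det_div_pow hVW
  rw [Fintype.card_fin, ← pow_mul] at hdet
  have hnorm : ‖V.det‖ = 1 := CStarRing.norm_of_mem_unitary (det_of_mem_unitary hV)
  rw [hdet] at hnorm
  exact Int.sq_ne_prime_pow_of_odd Nat.prime_two (hq.mul hn) W.det
    (by exact_mod_cast Int.sq_eq_two_pow_of_norm_div_sqrt_two_pow_eq_one hnorm)
end

section
/- Let n ≥ 1 and let v be an n-dimensional unit vector all of whose entries lie in ℤ[1/√2] = {x₀ + x₁√2 : x₀, x₁ ∈ ℤ[1/2]}, with lde_√2(v) > 0. Then there exist finitely many generators G₁, …, G_ℓ, each taken from the set {(-1)_[a], X_[a,b], H_[a,b] : a, b distinct elements of {1,…,n}}, such that v' = G₁ ⋯ G_ℓ v satisfies lde_√2(v') < lde_√2(v). -/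
open Matrix Complex

noncomputable section

/-- `G` is one of the generators `(-1)_[a]`, `X_[a,b]`, `H_[a,b]` with `a ≠ b`. -/
def IsRealGen {n : ℕ} (G : Matrix (Fin n) (Fin n) ℂ) : Prop :=
  (∃ a : Fin n, G = levelOp ![a] !![-1]) ∨
  (∃ a b : Fin n, a ≠ b ∧ G = levelOp ![a, b] Xmat) ∨
  (∃ a b : Fin n, a ≠ b ∧ G = levelOp ![a, b] Hmat)

/-- `x` is a dyadic fraction: an element of `ℤ[1/2]` (viewed inside `ℂ`). -/
def IsDyadic (x : ℂ) : Prop := ∃ (u : ℤ) (q : ℕ), x = (u : ℂ) / 2 ^ q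

/-- `x` belongs to the ring `ℤ[1/√2] = {x₀ + x₁√2 : x₀, x₁ ∈ ℤ[1/2]}`. -/
def InDSqrt2 (x : ℂ) : Prop :=
  ∃ x₀ x₁ : ℂ, IsDyadic x₀ ∧ IsDyadic x₁ ∧ x = x₀ + x₁ * Real.sqrt 2

/-- The least √2-denominator exponent of a vector `v` with entries in
`ℤ[1/√2]`: the least `q : ℕ` such that `√2^q · v` has entries in `ℤ[√2]`. -/
def ldeSqrt2 {n : ℕ} (v : Fin n → ℂ) : ℕ :=
  sInf {q : ℕ | ∀ j, ∃ a b : ℤ, (Real.sqrt 2 : ℂ) ^ q * v j = (a : ℂ) + (b : ℂ) * Real.sqrt 2}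

/-!
Write `√2 ^ k * v j = a j + b j * √2` with `k = lde v ≥ 1`. The entries of `v` are real, so
`‖v‖ = 1` gives `∑ (a j + b j √2)² = 2 ^ k`, i.e. `∑ (a j² + 2 b j²) = 2 ^ k` and `∑ a j b j = 0`.
Hence the indices with `a j` odd fall into two classes, `b j` even or odd, each of even size.
An entry with `a j` even already has exponent `k - 1`. For two indices of the same class,
`H_[i,j]` replaces `x, y` by `(x ± y) / √2`, and `√2 ^ (k - 1) (x ± y) / √2` equals
`((a i ± a j) + (b i ± b j) √2) / 2 ∈ ℤ[√2]`, both coefficients being even. Pairing off each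
class lowers the exponent of every entry.
-/

open Finset

lemma sqrtTwo_mul_sqrtTwo : (√2 : ℂ) * √2 = 2 := by
  rw [← Complex.ofReal_mul, Real.mul_self_sqrt zero_le_two, Complex.ofReal_ofNat]

lemma sqrtTwo_ne_zero : (√2 : ℂ) ≠ 0 :=
  Complex.ofReal_ne_zero.2 (Real.sqrt_ne_zero'.2 two_pos)

lemma eq_and_eq_zero_of_add_mul_sqrtTwo_eq {A B C : ℤ} (h : (A : ℂ) + B * √2 = C) :
    A = C ∧ B = 0 := by
  have hR : (A : ℝ) + B * √2 = C := by exact_mod_cast congrArg Complex.re h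
  obtain rfl : B = 0 := by
    by_contra hB
    exact ((irrational_sqrt_two.mul_intCast hB).add_intCast A).ne_int C (by linarith)
  exact ⟨by simpa using hR, rfl⟩

-- `ldeSqrt2 v` unfolds to `sInf {q | ∀ j, IsDenomExp q (v j)}`.
def IsDenomExp (q : ℕ) (x : ℂ) : Prop :=
  ∃ a b : ℤ, (√2 : ℂ) ^ q * x = a + b * √2

lemma IsDenomExp.succ {q : ℕ} {x : ℂ} (h : IsDenomExp q x) : IsDenomExp (q + 1) x := by
  obtain ⟨a, b, hab⟩ := h
  refine ⟨2 * b, a, ?_⟩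
  push_cast
  linear_combination (√2 : ℂ) * hab + b * sqrtTwo_mul_sqrtTwo

lemma IsDenomExp.mono {q q' : ℕ} {x : ℂ} (h : IsDenomExp q x) (hq : q ≤ q') :
    IsDenomExp q' x :=
  Nat.le_induction h (fun _ _ => IsDenomExp.succ) q' hq

lemma IsDyadic.exists_two_pow_mul_eq_intCast {x : ℂ} (hx : IsDyadic x) :
    ∃ p : ℕ, ∀ P, p ≤ P → ∃ c : ℤ, (2 : ℂ) ^ P * x = c := by
  obtain ⟨u, p, rfl⟩ := hx
  refine ⟨p, fun P hP => ?_⟩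
  obtain ⟨r, rfl⟩ := Nat.exists_eq_add_of_le hP
  refine ⟨u * 2 ^ r, ?_⟩
  push_cast
  rw [pow_add]
  field_simp

lemma InDSqrt2.exists_isDenomExp {x : ℂ} (hx : InDSqrt2 x) : ∃ q, IsDenomExp q x := by
  obtain ⟨x₀, x₁, h₀, h₁, rfl⟩ := hx
  obtain ⟨p₀, hp₀⟩ := h₀.exists_two_pow_mul_eq_intCast
  obtain ⟨p₁, hp₁⟩ := h₁.exists_two_pow_mul_eq_intCast
  obtain ⟨a, ha⟩ := hp₀ (max p₀ p₁) (le_max_left _ _)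
  obtain ⟨b, hb⟩ := hp₁ (max p₀ p₁) (le_max_right _ _)
  refine ⟨2 * max p₀ p₁, a, b, ?_⟩
  rw [pow_mul, sq, sqrtTwo_mul_sqrtTwo]
  linear_combination ha + (√2 : ℂ) * hb

lemma isDenomExp_ldeSqrt2 {n : ℕ} {v : Fin n → ℂ} (hv : ∀ j, InDSqrt2 (v j)) (j : Fin n) :
    IsDenomExp (ldeSqrt2 v) (v j) := by
  choose q hq using fun j => (hv j).exists_isDenomExp
  exact Nat.sInf_mem (s := {q | ∀ j, IsDenomExp q (v j)})
    ⟨univ.sup q, fun j => (hq j).mono (le_sup (mem_univ j))⟩ j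

lemma ldeSqrt2_le {n q : ℕ} {v : Fin n → ℂ} (hv : ∀ j, IsDenomExp q (v j)) :
    ldeSqrt2 v ≤ q :=
  Nat.sInf_le hv

lemma isDenomExp_of_even {q : ℕ} {x : ℂ} {a b : ℤ}
    (h : (√2 : ℂ) ^ (q + 1) * x = a + b * √2) (ha : Even a) : IsDenomExp q x := by
  obtain ⟨t, rfl⟩ := ha
  refine ⟨b, t, mul_left_cancel₀ sqrtTwo_ne_zero ?_⟩
  rw [pow_succ'] at h
  push_cast at h
  linear_combination h - t * sqrtTwo_mul_sqrtTwo

lemma isDenomExp_mul_inv_sqrtTwo {q : ℕ} {z : ℂ} {A B : ℤ}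
    (h : (√2 : ℂ) ^ (q + 1) * z = A + B * √2) (hA : Even A) (hB : Even B) :
    IsDenomExp q (z * (√2 : ℂ)⁻¹) := by
  obtain ⟨e, rfl⟩ := hA
  obtain ⟨f, rfl⟩ := hB
  refine ⟨e, f, mul_left_cancel₀ (two_ne_zero (α := ℂ)) ?_⟩
  have h2 : (2 : ℂ) * ((√2 : ℂ) ^ q * (z * (√2 : ℂ)⁻¹)) = (√2 : ℂ) ^ (q + 1) * z := by
    rw [← sqrtTwo_mul_sqrtTwo, pow_succ]
    field_simp
  rw [h2, h]
  push_cast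
  ring

lemma isDenomExp_hadamard {q : ℕ} {x y : ℂ} {a b c d : ℤ}
    (hx : (√2 : ℂ) ^ (q + 1) * x = a + b * √2) (hy : (√2 : ℂ) ^ (q + 1) * y = c + d * √2)
    (hac : Even (a + c)) (hbd : Even (b + d)) :
    IsDenomExp q ((x + y) * (√2 : ℂ)⁻¹) ∧ IsDenomExp q ((x - y) * (√2 : ℂ)⁻¹) := by
  refine ⟨isDenomExp_mul_inv_sqrtTwo (A := a + c) (B := b + d) ?_ hac hbd,
    isDenomExp_mul_inv_sqrtTwo (A := a - c) (B := b - d) ?_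
      (Int.even_sub.2 (Int.even_add.1 hac)) (Int.even_sub.2 (Int.even_add.1 hbd))⟩
  · push_cast
    linear_combination hx + hy
  · push_cast
    linear_combination hx - hy

lemma levelOp_pair_mulVec {n : ℕ} {i j : Fin n} (hij : i ≠ j) (W : Matrix (Fin 2) (Fin 2) ℂ)
    (u : Fin n → ℂ) (m : Fin n) :
    (levelOp ![i, j] W *ᵥ u) m =
      if m = i then W 0 0 * u i + W 0 1 * u j
      else if m = j then W 1 0 * u i + W 1 1 * u j
      else u m := by
  simp only [mulVec, dotProduct, levelOp, Fin.sum_univ_two, Matrix.cons_val_zero,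
    Matrix.cons_val_one, Fin.forall_fin_two]
  by_cases hmi : m = i
  · subst hmi
    simp [hij.symm, add_mul, ite_mul, sum_add_distrib]
  by_cases hmj : m = j
  · subst hmj
    simp [hij, hmi, add_mul, ite_mul, sum_add_distrib]
  · simp [hmi, Ne.symm hmi, hmj, Ne.symm hmj, ite_mul]

lemma hadamard_mulVec {n : ℕ} {i j : Fin n} (hij : i ≠ j) (u : Fin n → ℂ) (m : Fin n) :
    (levelOp ![i, j] Hmat *ᵥ u) m =
      if m = i then (u i + u j) * (√2 : ℂ)⁻¹
      else if m = j then (u i - u j) * (√2 : ℂ)⁻¹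
      else u m := by
  rw [levelOp_pair_mulVec hij]
  simp only [Hmat, Matrix.smul_apply, of_apply, cons_val', cons_val_zero, cons_val_one,
    empty_val', cons_val_fin_one, smul_eq_mul]
  split_ifs <;> ring

lemma exists_hadamards_isDenomExp {n q : ℕ} (u : Fin n → ℂ) (S : Finset (Fin n))
    (hS : Even #S)
    (hpair : ∀ i ∈ S, ∀ j ∈ S, i ≠ j →
      IsDenomExp q ((u i + u j) * (√2 : ℂ)⁻¹) ∧ IsDenomExp q ((u i - u j) * (√2 : ℂ)⁻¹)) :
    ∃ L : List (Matrix (Fin n) (Fin n) ℂ), (∀ G ∈ L, IsRealGen G) ∧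
      (∀ m ∈ S, IsDenomExp q ((L.prod *ᵥ u) m)) ∧ ∀ m ∉ S, (L.prod *ᵥ u) m = u m := by
  induction S using Finset.strongInduction with
  | H S ih =>
  rcases S.eq_empty_or_nonempty with rfl | ⟨i, hi⟩
  · exact ⟨[], by simp, by simp, by simp⟩
  obtain ⟨j, hj⟩ : (S.erase i).Nonempty := by
    rw [← card_pos, card_erase_of_mem hi]
    obtain ⟨r, hr⟩ := hS
    have := card_pos.2 ⟨i, hi⟩
    omega
  have hji : j ≠ i := ne_of_mem_erase hj
  set T := (S.erase i).erase j with hT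
  have hTS : T ⊂ S := (erase_subset _ _).trans_ssubset (erase_ssubset hi)
  have hT_even : Even #T := by
    rw [hT, card_erase_of_mem hj, card_erase_of_mem hi]
    obtain ⟨r, hr⟩ := hS
    exact ⟨r - 1, by omega⟩
  obtain ⟨L, hL, hLT, hLout⟩ := ih T hTS hT_even
    fun i' hi' j' hj' => hpair i' (hTS.subset hi') j' (hTS.subset hj')
  have hLi : (L.prod *ᵥ u) i = u i := hLout i (by simp [hT])
  have hLj : (L.prod *ᵥ u) j = u j := hLout j (by simp [hT])
  refine ⟨levelOp ![i, j] Hmat :: L, ?_, ?_, ?_⟩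
  · simpa using ⟨Or.inr (Or.inr ⟨i, j, hji.symm, rfl⟩), hL⟩
  · intro m hm
    rw [List.prod_cons, ← mulVec_mulVec, hadamard_mulVec hji.symm, hLi, hLj]
    split_ifs with hmi hmj
    · exact (hpair i hi j (mem_of_mem_erase hj) hji.symm).1
    · exact (hpair i hi j (mem_of_mem_erase hj) hji.symm).2
    · exact hLT m (by simp [hT, hm, hmi, hmj])
  · intro m hm
    have hmi : m ≠ i := fun h => hm (h ▸ hi)
    have hmj : m ≠ j := fun h => hm (h ▸ mem_of_mem_erase hj)
    rw [List.prod_cons, ← mulVec_mulVec, hadamard_mulVec hji.symm, if_neg hmi, if_neg hmj,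
      hLout m (fun h => hm (hTS.subset h))]

lemma Finset.even_sum_int_iff_even_card_odd {ι : Type*} (s : Finset ι) (f : ι → ℤ) :
    Even (∑ i ∈ s, f i) ↔ Even #{i ∈ s | Odd (f i)} := by
  classical
  induction s using Finset.cons_induction with
  | empty => simp
  | cons a s ha ih =>
    rw [sum_cons, filter_cons, Int.even_add, ih]
    split_ifs with h
    · rw [card_cons, Nat.even_add_one, ← Int.not_odd_iff_even]
      tauto
    · simp [Int.not_odd_iff_even.1 h]

lemma even_card_odd_of_sum_eq {ι : Type*} [Fintype ι] {a b : ι → ℤ} {q : ℕ}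
    (hsq : ∑ j, (a j ^ 2 + 2 * b j ^ 2) = 2 ^ (q + 1)) (hmix : ∑ j, a j * b j = 0) :
    Even #{j | Odd (a j) ∧ Even (b j)} ∧ Even #{j | Odd (a j) ∧ Odd (b j)} := by
  have hsq_even : Even (∑ j, a j ^ 2) := by
    rw [sum_add_distrib, ← mul_sum, pow_succ] at hsq
    exact ⟨2 ^ q - ∑ j, b j ^ 2, by linarith⟩
  have hodd : Even #{j | Odd (a j)} := by
    simpa [Int.odd_pow] using (even_sum_int_iff_even_card_odd univ (a · ^ 2)).1 hsq_even
  have hboth : Even #{j | Odd (a j) ∧ Odd (b j)} := by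
    simpa [Int.odd_mul] using (even_sum_int_iff_even_card_odd univ (fun j => a j * b j)).1
      (hmix ▸ Even.zero)
  have hsplit : #{j | Odd (a j) ∧ Even (b j)} + #{j | Odd (a j) ∧ Odd (b j)} =
      #{j | Odd (a j)} := by
    simp_rw [← Int.not_odd_iff_even, ← filter_filter]
    rw [add_comm]
    exact card_filter_add_card_filter_not _
  exact ⟨(Nat.even_add.1 (hsplit ▸ hodd)).2 hboth, hboth⟩

lemma sum_sq_eq_of_norm_eq_one {n k : ℕ} {v : Fin n → ℂ} {a b : Fin n → ℤ}
    (hunit : ∑ j, (starRingEnd ℂ) (v j) * v j = 1)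
    (hab : ∀ j, (√2 : ℂ) ^ k * v j = a j + b j * √2) :
    ∑ j, (a j ^ 2 + 2 * b j ^ 2) = 2 ^ k ∧ ∑ j, a j * b j = 0 := by
  have hreal : ∀ j, (starRingEnd ℂ) ((√2 : ℂ) ^ k * v j) = (√2 : ℂ) ^ k * v j := by
    intro j
    rw [hab]
    simp [Complex.conj_ofReal]
  have hsum : ∑ j, ((a j : ℂ) + b j * √2) ^ 2 = 2 ^ k := by
    calc ∑ j, ((a j : ℂ) + b j * √2) ^ 2
        = ∑ j, (starRingEnd ℂ) ((√2 : ℂ) ^ k * v j) * ((√2 : ℂ) ^ k * v j) := by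
          simp only [hreal, ← hab, sq]
      _ = ((√2 : ℂ) * √2) ^ k * ∑ j, (starRingEnd ℂ) (v j) * v j := by
          simp only [map_mul, map_pow, Complex.conj_ofReal, mul_sum]
          exact sum_congr rfl fun j _ => by ring
      _ = 2 ^ k := by rw [hunit, sqrtTwo_mul_sqrtTwo, mul_one]
  obtain ⟨hsq, hmix⟩ := eq_and_eq_zero_of_add_mul_sqrtTwo_eq
    (A := ∑ j, (a j ^ 2 + 2 * b j ^ 2)) (B := 2 * ∑ j, a j * b j) (C := 2 ^ k) (by
      push_cast
      rw [← hsum, mul_sum, sum_mul, ← sum_add_distrib]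
      exact sum_congr rfl fun j _ => by linear_combination -(b j : ℂ) ^ 2 * sqrtTwo_mul_sqrtTwo)
  exact ⟨hsq, by omega⟩

lemma exists_gens_isDenomExp {n q : ℕ} {v : Fin n → ℂ} {a b : Fin n → ℤ}
    (hab : ∀ j, (√2 : ℂ) ^ (q + 1) * v j = a j + b j * √2)
    (hcard : Even #{j | Odd (a j) ∧ Even (b j)} ∧ Even #{j | Odd (a j) ∧ Odd (b j)}) :
    ∃ L : List (Matrix (Fin n) (Fin n) ℂ), (∀ G ∈ L, IsRealGen G) ∧
      ∀ m, IsDenomExp q ((L.prod *ᵥ v) m) := by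
  set S₁ : Finset (Fin n) := {j | Odd (a j) ∧ Even (b j)}
  set S₂ : Finset (Fin n) := {j | Odd (a j) ∧ Odd (b j)}
  have hS₂₁ : ∀ m ∈ S₂, m ∉ S₁ := fun m h₂ h₁ =>
    Int.not_even_iff_odd.2 (mem_filter.1 h₂).2.2 (mem_filter.1 h₁).2.2
  obtain ⟨L₁, hL₁, hS₁, hout₁⟩ := exists_hadamards_isDenomExp v S₁ hcard.1
    fun i hi j hj _ => by
      simp only [S₁, mem_filter, mem_univ, true_and] at hi hj
      exact isDenomExp_hadamard (hab i) (hab j) (hi.1.add_odd hj.1) (hi.2.add hj.2)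
  obtain ⟨L₂, hL₂, hS₂, hout₂⟩ := exists_hadamards_isDenomExp (L₁.prod *ᵥ v) S₂ hcard.2
    fun i hi j hj _ => by
      rw [hout₁ i (hS₂₁ i hi), hout₁ j (hS₂₁ j hj)]
      simp only [S₂, mem_filter, mem_univ, true_and] at hi hj
      exact isDenomExp_hadamard (hab i) (hab j) (hi.1.add_odd hj.1) (hi.2.add_odd hj.2)
  refine ⟨L₂ ++ L₁, fun G hG => (List.mem_append.1 hG).elim (hL₂ G) (hL₁ G), fun m => ?_⟩
  rw [List.prod_append, ← mulVec_mulVec]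
  by_cases hm₂ : m ∈ S₂
  · exact hS₂ m hm₂
  rw [hout₂ m hm₂]
  by_cases hm₁ : m ∈ S₁
  · exact hS₁ m hm₁
  rw [hout₁ m hm₁]
  refine isDenomExp_of_even (hab m) (Int.not_odd_iff_even.1 fun ha => ?_)
  rcases Int.even_or_odd (b m) with hb | hb
  · exact hm₁ (by simp [S₁, ha, hb])
  · exact hm₂ (by simp [S₂, ha, hb])

theorem stmt13_general (n : ℕ) (v : Fin n → ℂ)
    (hunit : ∑ j, (starRingEnd ℂ) (v j) * v j = 1)
    (hR : ∀ j, InDSqrt2 (v j))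
    (hlde : 0 < ldeSqrt2 v) :
    ∃ L : List (Matrix (Fin n) (Fin n) ℂ),
      (∀ G ∈ L, IsRealGen G) ∧ ldeSqrt2 (L.prod.mulVec v) < ldeSqrt2 v := by
  obtain ⟨q, hq⟩ := Nat.exists_eq_add_one_of_ne_zero hlde.ne'
  choose a b hab using isDenomExp_ldeSqrt2 hR
  rw [hq] at hab
  obtain ⟨hsq, hmix⟩ := sum_sq_eq_of_norm_eq_one hunit hab
  obtain ⟨L, hL, hred⟩ := exists_gens_isDenomExp hab (even_card_odd_of_sum_eq hsq hmix)
  exact ⟨L, hL, hq ▸ Nat.lt_succ_of_le (ldeSqrt2_le hred)⟩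

/-- A unit vector over `ℤ[1/√2]` with positive least √2-denominator exponent
can have its exponent strictly reduced by generators `(-1)_[a]`, `X_[a,b]`,
`H_[a,b]`. -/
theorem stmt13 (n : ℕ) (hn : 1 ≤ n) (v : Fin n → ℂ)
    (hunit : ∑ j, (starRingEnd ℂ) (v j) * v j = 1)
    (hR : ∀ j, InDSqrt2 (v j))
    (hlde : 0 < ldeSqrt2 v) :
    ∃ L : List (Matrix (Fin n) (Fin n) ℂ),
      (∀ G ∈ L, IsRealGen G) ∧ ldeSqrt2 (L.prod.mulVec v) < ldeSqrt2 v :=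
  stmt13_general n v hunit hR hlde
end
end

section
/- If u₁, u₂ ∈ ℤ[i√2] satisfy u₁†u₁ ≡ 1 (mod 2) and u₂†u₂ ≡ 1 (mod 2) in ℤ[i√2] (where u† denotes complex conjugation), then there exist m₀, m₁, m₂, m₃ ∈ ℕ such that F^{m₀} · diag((-1)^{m₁}, (-1)^{m₂}) · X^{m₃} · (u₁, u₂)ᵀ = (u₁', u₂')ᵀ for some u₁', u₂' ∈ ℤ[i√2] with u₁' ≡ u₂' ≡ 0 (mod i√2), i.e. u₁', u₂' ∈ i√2·ℤ[i√2]. -/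
open Matrix Complex

noncomputable section

/-- The gate `F = (1/2)[[1+i√2, 1],[1, -1+i√2]]`. -/
def Fmat : Matrix (Fin 2) (Fin 2) ℂ :=
  (2 : ℂ)⁻¹ • !![1 + Complex.I * Real.sqrt 2, 1; 1, -1 + Complex.I * Real.sqrt 2]

/-- `G` is one of the generators `(-1)_[a]`, `X_[a,b]`, `F_[a,b]` with `a ≠ b`. -/
def IsImGen {n : ℕ} (G : Matrix (Fin n) (Fin n) ℂ) : Prop :=
  (∃ a : Fin n, G = levelOp ![a] !![-1]) ∨
  (∃ a b : Fin n, a ≠ b ∧ G = levelOp ![a, b] Xmat) ∨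
  (∃ a b : Fin n, a ≠ b ∧ G = levelOp ![a, b] Fmat)

/-- `x` belongs to the ring `ℤ[i√2] = {a + b·i√2 : a, b ∈ ℤ}` (inside `ℂ`). -/
def InZIrt2 (x : ℂ) : Prop :=
  ∃ a b : ℤ, x = (a : ℂ) + (b : ℂ) * (Complex.I * Real.sqrt 2)

private lemma h2C : ((Real.sqrt 2 : ℝ) : ℂ) * ((Real.sqrt 2 : ℝ) : ℂ) = 2 := by
  rw [← Complex.ofReal_mul]; norm_num [Real.mul_self_sqrt]

private lemma hzz :
    (Complex.I * (Real.sqrt 2 : ℝ)) * (Complex.I * (Real.sqrt 2 : ℝ)) = -2 := by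
  rw [mul_mul_mul_comm, Complex.I_mul_I, h2C]; norm_num

private lemma ext2 {A B C D : ℤ}
    (h : (A:ℂ) + (B:ℂ) * (Complex.I * Real.sqrt 2)
        = (C:ℂ) + (D:ℂ) * (Complex.I * Real.sqrt 2)) :
    A = C ∧ B = D := by
  have hre := congrArg Complex.re h
  have him := congrArg Complex.im h
  simp [Complex.add_re, Complex.add_im, Complex.mul_re, Complex.mul_im] at hre him
  exact ⟨hre, him⟩

private lemma odd_of (a b p q : ℤ)
    (h : (starRingEnd ℂ) ((a:ℂ) + (b:ℂ)*(Complex.I*Real.sqrt 2))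
          * ((a:ℂ) + (b:ℂ)*(Complex.I*Real.sqrt 2)) - 1
      = 2 * ((p:ℂ) + (q:ℂ)*(Complex.I*Real.sqrt 2))) : Odd a := by
  have hconj : (starRingEnd ℂ) ((a:ℂ) + (b:ℂ)*(Complex.I*Real.sqrt 2))
      = (a:ℂ) - (b:ℂ)*(Complex.I*Real.sqrt 2) := by
    simp [map_add, _root_.map_mul, Complex.conj_I, Complex.conj_ofReal]
    ring
  rw [hconj] at h
  have key : ((a*a + 2*b*b - 1 : ℤ) : ℂ) + ((0:ℤ):ℂ)*(Complex.I*Real.sqrt 2)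
      = ((2*p:ℤ):ℂ) + ((2*q:ℤ):ℂ)*(Complex.I*Real.sqrt 2) := by
    push_cast
    linear_combination h + (b:ℂ)*(b:ℂ)*hzz
  obtain ⟨h1, h2⟩ := ext2 key
  have ho : Odd (a*a) := ⟨p - b*b, by linarith⟩
  exact (Int.odd_mul.mp ho).1

private lemma mvF2 (x₁ x₂ : ℂ) :
    (Fmat ^ 2 * !![(-1 : ℂ) ^ 0, 0; 0, (-1 : ℂ) ^ 0] * Xmat ^ 0).mulVec ![x₁, x₂]
      = ![(Complex.I*Real.sqrt 2)/2*(x₁+x₂), (Complex.I*Real.sqrt 2)/2*(x₁-x₂)] := by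
  funext i
  fin_cases i <;>
    simp [Fmat, Xmat, Matrix.mulVec, dotProduct, Matrix.mul_apply,
      Fin.sum_univ_two, pow_succ]
  · linear_combination (x₁/4) * hzz
  · linear_combination (x₂/4) * hzz

private lemma mvF10 (x₁ x₂ : ℂ) :
    (Fmat ^ 1 * !![(-1 : ℂ) ^ 0, 0; 0, (-1 : ℂ) ^ 0] * Xmat ^ 0).mulVec ![x₁, x₂]
      = ![(1/2)*((1+Complex.I*Real.sqrt 2)*x₁ + x₂),
          (1/2)*(x₁ + (-1+Complex.I*Real.sqrt 2)*x₂)] := by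
  funext i
  fin_cases i <;>
    simp [Fmat, Xmat, Matrix.mulVec, dotProduct, Matrix.mul_apply,
      Fin.sum_univ_two, pow_succ] <;>
    ring

private lemma mvF11 (x₁ x₂ : ℂ) :
    (Fmat ^ 1 * !![(-1 : ℂ) ^ 0, 0; 0, (-1 : ℂ) ^ 0] * Xmat ^ 1).mulVec ![x₁, x₂]
      = ![(1/2)*((1+Complex.I*Real.sqrt 2)*x₂ + x₁),
          (1/2)*(x₂ + (-1+Complex.I*Real.sqrt 2)*x₁)] := by
  funext i
  fin_cases i <;>
    simp [Fmat, Xmat, Matrix.mulVec, dotProduct, Matrix.mul_apply,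
      Fin.sum_univ_two, pow_succ] <;>
    ring

/-- If `u₁, u₂ ∈ ℤ[i√2]` satisfy `u†u ≡ 1 (mod 2)`, then after applying a
suitable power of `F`, signs, and a possible swap, both entries become
divisible by `i√2` in `ℤ[i√2]`. -/
theorem stmt15 (u₁ u₂ : ℂ) (h₁ : InZIrt2 u₁) (h₂ : InZIrt2 u₂)
    (hc₁ : ∃ t : ℂ, InZIrt2 t ∧ (starRingEnd ℂ) u₁ * u₁ - 1 = 2 * t)
    (hc₂ : ∃ t : ℂ, InZIrt2 t ∧ (starRingEnd ℂ) u₂ * u₂ - 1 = 2 * t) :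
    ∃ (m₀ m₁ m₂ m₃ : ℕ) (u₁' u₂' : ℂ),
      (∃ t : ℂ, InZIrt2 t ∧ u₁' = (Complex.I * Real.sqrt 2) * t) ∧
      (∃ t : ℂ, InZIrt2 t ∧ u₂' = (Complex.I * Real.sqrt 2) * t) ∧
      (Fmat ^ m₀ * !![(-1 : ℂ) ^ m₁, 0; 0, (-1 : ℂ) ^ m₂] * Xmat ^ m₃).mulVec ![u₁, u₂]
        = ![u₁', u₂'] := by
  obtain ⟨a₁, b₁, hu₁⟩ := h₁
  obtain ⟨a₂, b₂, hu₂⟩ := h₂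
  obtain ⟨t₁, ⟨p₁, q₁, ht₁⟩, he₁⟩ := hc₁
  obtain ⟨t₂, ⟨p₂, q₂, ht₂⟩, he₂⟩ := hc₂
  rw [hu₁, ht₁] at he₁
  rw [hu₂, ht₂] at he₂
  obtain ⟨f, hf⟩ := odd_of a₁ b₁ p₁ q₁ he₁
  obtain ⟨g, hg⟩ := odd_of a₂ b₂ p₂ q₂ he₂
  subst hf hg
  rcases Int.even_or_odd (b₁ + b₂) with ⟨k, hk⟩ | ⟨k, hk⟩
  · -- b₁ + b₂ even : use F², no swap
    have hb₂ : b₂ = k + k - b₁ := by omega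
    subst hb₂
    refine ⟨2, 0, 0, 0, _, _, ⟨_, ⟨f+g+1, k, rfl⟩, rfl⟩, ⟨_, ⟨f-g, b₁-k, rfl⟩, rfl⟩, ?_⟩
    rw [mvF2, hu₁, hu₂]
    funext i
    fin_cases i <;> simp <;> push_cast <;> ring
  · rcases Int.even_or_odd (f + g + 1 - b₁) with ⟨d, hd⟩ | hodd
    · -- use F¹, no swap
      have hb₁ : b₁ = f + g + 1 - 2*d := by omega
      subst hb₁
      have hb₂ : b₂ = 2*k - f - g + 2*d := by omega
      subst hb₂
      refine ⟨1, 0, 0, 0, _, _, ⟨_, ⟨f+k+1, -d, rfl⟩, rfl⟩,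
        ⟨_, ⟨f+2*g+1-2*d-k, k-f+d, rfl⟩, rfl⟩, ?_⟩
      rw [mvF10, hu₁, hu₂]
      funext i
      fin_cases i <;> simp <;> push_cast
      · linear_combination ((f:ℂ)+g+1)/2 * hzz
      · linear_combination ((f:ℂ)-g)/2 * hzz
    · -- use F¹ after swap
      obtain ⟨d, hd⟩ : ∃ d, f + g + 1 - b₂ = 2*d := by
        obtain ⟨e, he⟩ := hodd; exact ⟨e + b₁ - k, by omega⟩
      have hb₂ : b₂ = f + g + 1 - 2*d := by omega
      subst hb₂
      have hb₁ : b₁ = 2*k - f - g + 2*d := by omega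
      subst hb₁
      refine ⟨1, 0, 0, 1, _, _, ⟨_, ⟨g+k+1, -d, rfl⟩, rfl⟩,
        ⟨_, ⟨2*f+g+1-2*d-k, k-g+d, rfl⟩, rfl⟩, ?_⟩
      rw [mvF11, hu₁, hu₂]
      funext i
      fin_cases i <;> simp <;> push_cast
      · linear_combination ((f:ℂ)+g+1)/2 * hzz
      · linear_combination ((g:ℂ)-f)/2 * hzz
end
end

section
/- Let n ≥ 1, let j ∈ {1,…,n}, and let v be an n-dimensional unit vector all of whose entries lie in ℤ[1/(i√2)] = {x₀ + x₁·i√2 : x₀, x₁ ∈ ℤ[1/2]}. Then there exist finitely many generators G₁, …, G_ℓ, each taken from the set {(-1)_[a], X_[a,b], F_[a,b] : a, b distinct elements of {1,…,n}}, such that G₁ ⋯ G_ℓ v = e_j, the j-th standard basis vector. -/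
/-
Write `ω = i√2`, so that `ω² = -2` and `ℤ[1/(i√2)] = ℤ[ω][1/ω]`. Over a common denominator,
`v = ω⁻ᵏ u` with `uᵢ = aᵢ + bᵢω ∈ ℤ[ω]` and `∑ (aᵢ² + 2bᵢ²) = 2ᵏ`; we induct on `k`.
For `k = 0` the vector is `±eᵢ`. For `k > 0` the sum is even, so the indices with `aᵢ` odd come
in pairs, and on each such pair one of the words `F`, `F·X`, `F·F` keeps the entries in `ℤ[ω]`
while making both `a`-parts even. Once every `aᵢ` is even, `ω` divides every `uᵢ`, which lowers
`k` by one.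
-/

open Matrix Complex

noncomputable section

/-- `x` belongs to the ring `ℤ[1/(i√2)] = {x₀ + x₁·i√2 : x₀, x₁ ∈ ℤ[1/2]}`. -/
def InDIrt2 (x : ℂ) : Prop :=
  ∃ x₀ x₁ : ℂ, IsDyadic x₀ ∧ IsDyadic x₁ ∧ x = x₀ + x₁ * (Complex.I * Real.sqrt 2)

open Function Relation ComplexConjugate

def ω : ℂ := I * Real.sqrt 2

lemma ω_sq : ω ^ 2 = -2 := by
  rw [ω, mul_pow, I_sq, ← ofReal_pow, Real.sq_sqrt zero_le_two]
  push_cast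
  ring

lemma ω_ne_zero : ω ≠ 0 := fun h => by simpa [h] using ω_sq

lemma conj_ω : conj ω = -ω := by
  simp [ω]

def zω (a b : ℤ) : ℂ := a + b * ω

lemma ω_mul_zω (a b : ℤ) : ω * zω a b = zω (-2 * b) a := by
  simp only [zω]
  push_cast
  linear_combination (b : ℂ) * ω_sq

def normZω (a b : ℤ) : ℤ := a ^ 2 + 2 * b ^ 2

lemma normZω_nonneg (a b : ℤ) : 0 ≤ normZω a b := by
  unfold normZω
  positivity

lemma normZω_eq_zero {a b : ℤ} (h : normZω a b = 0) : a = 0 ∧ b = 0 := by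
  unfold normZω at h
  have := sq_nonneg a
  have := sq_nonneg b
  exact ⟨pow_eq_zero_iff two_ne_zero |>.mp (by linarith),
    pow_eq_zero_iff two_ne_zero |>.mp (by linarith)⟩

lemma normZω_eq_one {a b : ℤ} (h : normZω a b = 1) : (a = 1 ∨ a = -1) ∧ b = 0 := by
  unfold normZω at h
  have := sq_nonneg a
  have := sq_nonneg b
  have hb : b ^ 2 = 0 := by omega
  exact ⟨sq_eq_one_iff.mp (by omega), pow_eq_zero_iff two_ne_zero |>.mp hb⟩

section Pair

variable {a₁ b₁ a₂ b₂ s t : ℤ}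

lemma F_zω (hs : a₁ + a₂ = 2 * s) (ht : a₁ + b₁ + b₂ = 2 * t) :
    ((1 + ω) * zω a₁ b₁ + zω a₂ b₂) / 2 = zω (s - b₁) t ∧
    (zω a₁ b₁ + (ω - 1) * zω a₂ b₂) / 2 = zω (s - a₂ - b₂) (t - s + a₂ - b₂) ∧
    normZω (s - b₁) t + normZω (s - a₂ - b₂) (t - s + a₂ - b₂) = normZω a₁ b₁ + normZω a₂ b₂ := by
  obtain rfl : a₁ = 2 * s - a₂ := by omega
  obtain rfl : b₁ = 2 * t - (2 * s - a₂) - b₂ := by omega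
  simp only [zω, normZω]
  push_cast
  refine ⟨?_, ?_, by ring⟩
  · linear_combination (2 * t - (2 * s - a₂) - b₂ : ℂ) / 2 * ω_sq
  · linear_combination (b₂ : ℂ) / 2 * ω_sq

lemma F_F_zω (hs : a₁ + a₂ = 2 * s) (ht : b₁ + b₂ = 2 * t) :
    ω * (zω a₁ b₁ + zω a₂ b₂) / 2 = zω (-2 * t) s ∧
    ω * (zω a₁ b₁ - zω a₂ b₂) / 2 = zω (-2 * (t - b₂)) (s - a₂) ∧
    normZω (-2 * t) s + normZω (-2 * (t - b₂)) (s - a₂) = normZω a₁ b₁ + normZω a₂ b₂ := by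
  obtain rfl : a₁ = 2 * s - a₂ := by omega
  obtain rfl : b₁ = 2 * t - b₂ := by omega
  simp only [zω, normZω]
  push_cast
  refine ⟨?_, ?_, by ring⟩
  · linear_combination (t : ℂ) * ω_sq
  · linear_combination (t - b₂ : ℂ) * ω_sq

end Pair

lemma update_update_update_update {α β : Type*} [DecidableEq α] {p q : α} (hpq : p ≠ q)
    (v : α → β) (x y x' y' : β) :
    update (update (update (update v p x) q y) p x') q y' = update (update v p x') q y' := by
  rw [update_comm hpq.symm, update_idem, update_idem]

section Gates

variable {n : ℕ} {p q : Fin n}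

lemma levelOp_single_mulVec (p : Fin n) (W : Matrix (Fin 1) (Fin 1) ℂ) (v : Fin n → ℂ) :
    levelOp ![p] W *ᵥ v = update v p (W 0 0 * v p) := by
  funext i
  rcases eq_or_ne i p with rfl | hip
  · simp [levelOp, mulVec, dotProduct]
  · simp [levelOp, mulVec, dotProduct, hip, hip.symm]

lemma levelOp_pair_mulVec_s17 (hpq : p ≠ q) (W : Matrix (Fin 2) (Fin 2) ℂ) (v : Fin n → ℂ) :
    levelOp ![p, q] W *ᵥ v =
      update (update v p (W 0 0 * v p + W 0 1 * v q)) q (W 1 0 * v p + W 1 1 * v q) := by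
  funext i
  rcases eq_or_ne i q with rfl | hiq
  · simp [levelOp, mulVec, dotProduct, hpq, add_mul, Finset.sum_add_distrib, Fin.sum_univ_two,
      Fin.forall_fin_two]
  rcases eq_or_ne i p with rfl | hip
  · simp [levelOp, mulVec, dotProduct, hpq, hpq.symm, add_mul, Finset.sum_add_distrib,
      Fin.sum_univ_two, Fin.forall_fin_two]
  · simp [levelOp, mulVec, dotProduct, hip, hiq, hip.symm, hiq.symm, Finset.sum_add_distrib,
      Fin.sum_univ_two, Fin.forall_fin_two]

def ImGenStep (v w : Fin n → ℂ) : Prop := ∃ G, IsImGen G ∧ G *ᵥ v = w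

lemma imGenStep_neg (p : Fin n) (v : Fin n → ℂ) : ImGenStep v (update v p (-v p)) :=
  ⟨_, .inl ⟨p, rfl⟩, by simp [levelOp_single_mulVec]⟩

lemma imGenStep_X (hpq : p ≠ q) (v : Fin n → ℂ) :
    ImGenStep v (update (update v p (v q)) q (v p)) :=
  ⟨_, .inr (.inl ⟨p, q, hpq, rfl⟩), by simp [levelOp_pair_mulVec_s17 hpq, Xmat]⟩

lemma imGenStep_F (hpq : p ≠ q) (v : Fin n → ℂ) :
    ImGenStep v
      (update (update v p (((1 + ω) * v p + v q) / 2)) q ((v p + (ω - 1) * v q) / 2)) := by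
  refine ⟨_, .inr (.inr ⟨p, q, hpq, rfl⟩), ?_⟩
  rw [levelOp_pair_mulVec_s17 hpq]
  simp only [Fmat, Matrix.smul_apply, of_apply, cons_val', cons_val_zero, cons_val_one,
    cons_val_fin_one, smul_eq_mul, mul_one, ω]
  congr 2 <;> ring

lemma reflTransGen_F_F (hpq : p ≠ q) (v : Fin n → ℂ) :
    ReflTransGen ImGenStep v
      (update (update v p (ω * (v p + v q) / 2)) q (ω * (v p - v q) / 2)) := by
  have h := ReflTransGen.head (imGenStep_F hpq v) (.single (imGenStep_F hpq _))
  simp only [update_self, update_of_ne hpq, update_update_update_update hpq] at h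
  convert h using 3
  · linear_combination (-v p / 4) * ω_sq
  · linear_combination (-v q / 2) * ω_sq

lemma reflTransGen_F_X (hpq : p ≠ q) (v : Fin n → ℂ) :
    ReflTransGen ImGenStep v
      (update (update v p (((1 + ω) * v q + v p) / 2)) q ((v q + (ω - 1) * v p) / 2)) := by
  have h := ReflTransGen.head (imGenStep_X hpq v) (.single (imGenStep_F hpq _))
  simpa only [update_self, update_of_ne hpq, update_update_update_update hpq] using h

lemma Relation.ReflTransGen.imGenStep_smul {v w : Fin n → ℂ} (h : ReflTransGen ImGenStep v w)
    (c : ℂ) :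
    ReflTransGen ImGenStep (c • v) (c • w) :=
  ReflTransGen.lift (c • ·) (fun _ _ ⟨G, hG, hGv⟩ => ⟨G, hG, by rw [mulVec_smul, hGv]⟩) _ _ h

lemma Relation.ReflTransGen.exists_list_prod_mulVec {v w : Fin n → ℂ}
    (h : ReflTransGen ImGenStep v w) :
    ∃ L : List (Matrix (Fin n) (Fin n) ℂ), (∀ G ∈ L, IsImGen G) ∧ L.prod *ᵥ v = w := by
  induction h with
  | refl => exact ⟨[], by simp, by simp⟩
  | tail _ hstep ih =>
    obtain ⟨L, hL, hLv⟩ := ih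
    obtain ⟨G, hG, rfl⟩ := hstep
    refine ⟨G :: L, ?_, by rw [List.prod_cons, ← mulVec_mulVec, hLv]⟩
    simpa using ⟨hG, hL⟩

lemma reflTransGen_single_one (i j : Fin n) {u : ℂ} (hu : u = 1 ∨ u = -1) :
    ReflTransGen ImGenStep (Pi.single i u) (Pi.single j 1) := by
  have hpos : ReflTransGen ImGenStep (Pi.single i u) (Pi.single i 1) := by
    rcases hu with rfl | rfl
    · exact .refl
    · refine .single ?_
      convert imGenStep_neg i (Pi.single i (-1)) using 1
      funext k
      by_cases hk : k = i <;> simp [hk]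
  refine hpos.trans ?_
  rcases eq_or_ne i j with rfl | hij
  · exact .refl
  · refine .single ?_
    convert imGenStep_X hij (Pi.single i 1) using 1
    funext k
    by_cases hk : k = j <;> by_cases hk' : k = i <;> simp [hk, hk', hij, hij.symm]

end Gates

section IntVec

variable {ι : Type*}

def intVec (a b : ι → ℤ) : ι → ℂ := fun i => zω (a i) (b i)

def normSqInt [Fintype ι] (a b : ι → ℤ) : ℤ := ∑ i, normZω (a i) (b i)

lemma intVec_update [DecidableEq ι] (a b : ι → ℤ) (p : ι) (x y : ℤ) :
    intVec (update a p x) (update b p y) = update (intVec a b) p (zω x y) :=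
  funext (apply_update₂ (fun _ => zω) a b p x y)

lemma normSqInt_update_update [Fintype ι] [DecidableEq ι] {p q : ι} (hpq : p ≠ q) (a b : ι → ℤ)
    {a₁ b₁ a₂ b₂ : ℤ} (h : normZω a₁ b₁ + normZω a₂ b₂ = normZω (a p) (b p) + normZω (a q) (b q)) :
    normSqInt (update (update a p a₁) q a₂) (update (update b p b₁) q b₂) = normSqInt a b := by
  rw [normSqInt, normSqInt, ← sub_eq_zero, ← Finset.sum_sub_distrib, Fintype.sum_eq_add p q hpq]
  · simp [hpq]
    linarith
  · rintro i ⟨hip, hiq⟩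
    simp [hip, hiq]

lemma even_sum_normZω {s : Finset ι} {a : ι → ℤ} (b : ι → ℤ) (h : ∀ i ∈ s, Even (a i)) :
    Even (∑ i ∈ s, normZω (a i) (b i)) :=
  Finset.even_sum _ fun i hi => ((h i hi).pow_of_ne_zero two_ne_zero).add (even_two_mul _)

lemma odd_normZω {a : ℤ} (b : ℤ) (h : Odd a) : Odd (normZω a b) :=
  h.pow.add_even (even_two_mul _)

lemma exists_ne_odd_of_even_normSqInt [Fintype ι] [DecidableEq ι] {a b : ι → ℤ} {p : ι}
    (hp : Odd (a p)) (h : Even (normSqInt a b)) : ∃ q, q ≠ p ∧ Odd (a q) := by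
  by_contra! hall
  have hrest := even_sum_normZω (s := Finset.univ.erase p) b
    fun i hi => Int.not_odd_iff_even.mp (hall i (Finset.ne_of_mem_erase hi))
  rw [normSqInt, ← Finset.add_sum_erase _ _ (Finset.mem_univ p)] at h
  exact Int.not_even_iff_odd.mpr ((odd_normZω (b p) hp).add_even hrest) h

lemma exists_intVec_eq_single [Fintype ι] [DecidableEq ι] {a b : ι → ℤ} (h : normSqInt a b = 1) :
    ∃ p, ∃ u : ℤ, (u = 1 ∨ u = -1) ∧ intVec a b = Pi.single p (u : ℂ) := by
  obtain ⟨p, hp⟩ : ∃ p, Odd (a p) := by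
    by_contra! hall
    have := even_sum_normZω (s := Finset.univ) b fun i _ => Int.not_odd_iff_even.mp (hall i)
    rw [← normSqInt, h] at this
    exact Int.not_even_one this
  have hsplit := Finset.add_sum_erase Finset.univ (fun i => normZω (a i) (b i)) (Finset.mem_univ p)
  rw [← normSqInt, h] at hsplit
  have hp1 : normZω (a p) (b p) = 1 := by
    have := Int.odd_iff.mp (odd_normZω (b p) hp)
    have := normZω_nonneg (a p) (b p)
    have := Finset.sum_nonneg fun i (_ : i ∈ Finset.univ.erase p) => normZω_nonneg (a i) (b i)
    omega
  have hrest (i : ι) (hi : i ≠ p) : a i = 0 ∧ b i = 0 := normZω_eq_zero <| by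
    have := Finset.single_le_sum (fun j _ => normZω_nonneg (a j) (b j))
      (Finset.mem_erase.mpr ⟨hi, Finset.mem_univ i⟩)
    have := normZω_nonneg (a i) (b i)
    omega
  obtain ⟨hu, hbp⟩ := normZω_eq_one hp1
  refine ⟨p, a p, hu, funext fun i => ?_⟩
  rcases eq_or_ne i p with rfl | hi
  · simp [intVec, zω, hbp]
  · simp [intVec, zω, hi, hrest i hi]

lemma intVec_two_mul (c b : ι → ℤ) : intVec (fun i => 2 * c i) b = ω • intVec b (-c) := by
  funext i
  simp [intVec, ω_mul_zω]

lemma normSqInt_two_mul [Fintype ι] (c b : ι → ℤ) :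
    normSqInt (fun i => 2 * c i) b = 2 * normSqInt b (-c) := by
  simp only [normSqInt, normZω, Finset.mul_sum, Pi.neg_apply]
  exact Finset.sum_congr rfl fun i _ => by ring

lemma card_filter_odd_update_update_lt [Fintype ι] [DecidableEq ι] {p q : ι}
    (hpq : p ≠ q) {a : ι → ℤ} (hp : Odd (a p)) {a₁ a₂ : ℤ} (h₁ : Even a₁) (h₂ : Even a₂) :
    (Finset.univ.filter fun i => Odd (update (update a p a₁) q a₂ i)).card <
      (Finset.univ.filter fun i => Odd (a i)).card := by
  refine Finset.card_lt_card ((Finset.ssubset_iff_of_subset fun i hi => ?_).mpr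
    ⟨p, by simpa using hp, by simpa [hpq] using Int.not_odd_iff_even.mpr h₁⟩)
  simp only [Finset.mem_filter, Finset.mem_univ, true_and, update_apply] at hi ⊢
  split_ifs at hi
  · exact absurd hi (Int.not_odd_iff_even.mpr h₂)
  · exact absurd hi (Int.not_odd_iff_even.mpr h₁)
  · exact hi

end IntVec

section Descent

variable {n : ℕ}

lemma exists_reflTransGen_even_pair {p q : Fin n} (hpq : p ≠ q) (a b : Fin n → ℤ)
    (hp : Odd (a p)) (hq : Odd (a q)) :
    ∃ a₁ b₁ a₂ b₂ : ℤ, Even a₁ ∧ Even a₂ ∧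
      normZω a₁ b₁ + normZω a₂ b₂ = normZω (a p) (b p) + normZω (a q) (b q) ∧
      ReflTransGen ImGenStep (intVec a b)
        (update (update (intVec a b) p (zω a₁ b₁)) q (zω a₂ b₂)) := by
  /- With `a p + a q = 2 * s`: if `b p + b q` is even, `F·F = (ω/2)[[1, 1], [1, -1]]` does it.
  Otherwise `F` keeps both entries in `ℤ[ω]` and gives the new `a`-part `s - b p` at `p`, or
  `s - b q` if `X` swaps the pair first; these differ by the odd number `b p + b q`. -/
  obtain ⟨s, hs⟩ := (hp.add_odd hq).two_dvd
  by_cases hb : Even (b p + b q)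
  · obtain ⟨t, ht⟩ := hb.two_dvd
    obtain ⟨h₁, h₂, hnorm⟩ := F_F_zω hs ht
    refine ⟨_, _, _, _, ⟨-t, by ring⟩, ⟨-(t - b q), by ring⟩, hnorm, ?_⟩
    simpa [intVec, h₁, h₂] using reflTransGen_F_F hpq (intVec a b)
  obtain ⟨t, ht⟩ : 2 ∣ a p + b p + b q := by
    rw [add_assoc]
    exact (hp.add_odd (Int.not_even_iff_odd.mp hb)).two_dvd
  by_cases hsp : Even (s - b p)
  · obtain ⟨h₁, h₂, hnorm⟩ := F_zω hs ht
    refine ⟨_, _, _, _, hsp, ?_, hnorm, ?_⟩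
    · simp only [Int.even_iff, Int.odd_iff] at *
      omega
    · simpa [intVec, h₁, h₂] using ReflTransGen.single (imGenStep_F hpq (intVec a b))
  · obtain ⟨h₁, h₂, hnorm⟩ := F_zω (a₁ := a q) (b₁ := b q) (a₂ := a p) (b₂ := b p)
      (s := s) (t := s + t - a p) (by omega) (by omega)
    refine ⟨_, _, _, _, ?_, ?_, hnorm.trans (add_comm _ _), ?_⟩
    · simp only [Int.even_iff, Int.odd_iff] at *
      omega
    · simp only [Int.even_iff, Int.odd_iff] at *
      omega
    · simpa [intVec, h₁, h₂] using reflTransGen_F_X hpq (intVec a b)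

lemma exists_reflTransGen_intVec_even (a b : Fin n → ℤ) (h : Even (normSqInt a b)) :
    ∃ a' b' : Fin n → ℤ, (∀ i, Even (a' i)) ∧ normSqInt a' b' = normSqInt a b ∧
      ReflTransGen ImGenStep (intVec a b) (intVec a' b') := by
  induction hm : (Finset.univ.filter fun i => Odd (a i)).card using Nat.strong_induction_on
    generalizing a b with
  | _ m ih =>
  by_cases hall : ∀ i, Even (a i)
  · exact ⟨a, b, hall, rfl, .refl⟩
  obtain ⟨p, hp⟩ : ∃ p, Odd (a p) := by simpa [Int.not_even_iff_odd] using hall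
  obtain ⟨q, hqp, hq⟩ := exists_ne_odd_of_even_normSqInt hp h
  obtain ⟨a₁, b₁, a₂, b₂, h₁, h₂, hnorm, hreach⟩ := exists_reflTransGen_even_pair hqp.symm a b hp hq
  have hnorm' := normSqInt_update_update hqp.symm a b (b₁ := b₁) (b₂ := b₂) hnorm
  obtain ⟨a', b', heven, hnorm'', hreach'⟩ :=
    ih _ (hm ▸ card_filter_odd_update_update_lt hqp.symm hp h₁ h₂) _ _ (hnorm' ▸ h) rfl
  refine ⟨a', b', heven, hnorm''.trans hnorm', hreach.trans ?_⟩
  rwa [intVec_update, intVec_update] at hreach'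

lemma reflTransGen_single_of_normSqInt_eq_two_pow (j : Fin n) (k : ℕ) (a b : Fin n → ℤ)
    (h : normSqInt a b = 2 ^ k) :
    ReflTransGen ImGenStep ((ω ^ k)⁻¹ • intVec a b) (Pi.single j 1) := by
  induction k generalizing a b with
  | zero =>
    obtain ⟨p, u, hu, hv⟩ := exists_intVec_eq_single (by simpa using h)
    simpa [hv] using
      reflTransGen_single_one p j (u := (u : ℂ)) (by rcases hu with rfl | rfl <;> simp)
  | succ k ih =>
    obtain ⟨a', b', heven, hnorm, hreach⟩ :=
      exists_reflTransGen_intVec_even a b (h ▸ even_two.pow_of_ne_zero k.succ_ne_zero)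
    choose c hc using fun i => (heven i).two_dvd
    obtain rfl : a' = fun i => 2 * c i := funext hc
    refine (hreach.imGenStep_smul _).trans ?_
    have hdesc :
        (ω ^ (k + 1))⁻¹ • intVec (fun i => 2 * c i) b' = (ω ^ k)⁻¹ • intVec b' (-c) := by
      rw [intVec_two_mul, smul_smul, pow_succ, mul_inv, mul_assoc, inv_mul_cancel₀ ω_ne_zero,
        mul_one]
    rw [hdesc]
    refine ih _ _ ?_
    have := normSqInt_two_mul c b'
    rw [hnorm, h, pow_succ] at this
    linarith

end Descent

lemma InDIrt2.exists_eq_zω_div_pow {x : ℂ} (h : InDIrt2 x) : ∃ k a b, x = zω a b / ω ^ k := by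
  obtain ⟨_, _, ⟨u₀, q₀, rfl⟩, ⟨u₁, q₁, rfl⟩, rfl⟩ := h
  -- `ω ^ (2 * (q₀ + q₁)) = (-2) ^ (q₀ + q₁)` is a common multiple of both denominators.
  refine ⟨2 * (q₀ + q₁), (-1) ^ (q₀ + q₁) * 2 ^ q₁ * u₀, (-1) ^ (q₀ + q₁) * 2 ^ q₀ * u₁, ?_⟩
  rw [pow_mul, ω_sq, neg_pow (2 : ℂ), zω, ← ω]
  push_cast
  field_simp
  ring

lemma zω_div_pow_eq_succ (a b : ℤ) (k : ℕ) : zω a b / ω ^ k = zω (-2 * b) a / ω ^ (k + 1) := by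
  rw [← ω_mul_zω, pow_succ', mul_div_mul_left _ _ ω_ne_zero]

lemma exists_eq_smul_intVec {n : ℕ} {v : Fin n → ℂ} (hv : ∀ i, InDIrt2 (v i)) :
    ∃ k a b, v = (ω ^ k)⁻¹ • intVec a b := by
  choose k a b h using fun i => (hv i).exists_eq_zω_div_pow
  have hlevel (i : Fin n) (d : ℕ) : ∃ a' b', v i = zω a' b' / ω ^ (k i + d) := by
    induction d with
    | zero => exact ⟨a i, b i, h i⟩
    | succ d ih =>
      obtain ⟨a', b', h'⟩ := ih
      exact ⟨_, _, h'.trans (zω_div_pow_eq_succ a' b' _)⟩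
  let K := Finset.univ.sup k
  choose a' b' h' using fun i => hlevel i (K - k i)
  refine ⟨K, a', b', funext fun i => ?_⟩
  rw [h' i, Nat.add_sub_cancel' (Finset.le_sup (Finset.mem_univ i))]
  exact div_eq_inv_mul _ _

lemma conj_mul_self_inv_pow_mul_zω (a b : ℤ) (k : ℕ) :
    conj ((ω ^ k)⁻¹ * zω a b) * ((ω ^ k)⁻¹ * zω a b) = normZω a b / 2 ^ k := by
  have hω : conj ω * ω = 2 := by
    rw [conj_ω]
    linear_combination -ω_sq
  have hz : conj (zω a b) * zω a b = normZω a b := by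
    simp only [zω, normZω, map_add, map_mul, map_intCast, conj_ω]
    push_cast
    linear_combination (-(b : ℂ) ^ 2) * ω_sq
  rw [map_mul, mul_mul_mul_comm, map_inv₀, map_pow, ← mul_inv, ← mul_pow, hω, hz, inv_mul_eq_div]

lemma normSqInt_eq_two_pow {n k : ℕ} {a b : Fin n → ℤ}
    (h : ∑ i, conj (((ω ^ k)⁻¹ • intVec a b) i) * ((ω ^ k)⁻¹ • intVec a b) i = 1) :
    normSqInt a b = 2 ^ k := by
  simp only [Pi.smul_apply, smul_eq_mul, intVec, conj_mul_self_inv_pow_mul_zω,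
    ← Finset.sum_div] at h
  rw [div_eq_one_iff_eq (pow_ne_zero _ two_ne_zero)] at h
  exact_mod_cast h

theorem stmt17_general (n : ℕ) (j : Fin n) (v : Fin n → ℂ)
    (hunit : ∑ k, (starRingEnd ℂ) (v k) * v k = 1)
    (hR : ∀ k, InDIrt2 (v k)) :
    ∃ L : List (Matrix (Fin n) (Fin n) ℂ),
      (∀ G ∈ L, IsImGen G) ∧
      L.prod.mulVec v = fun k => if k = j then (1 : ℂ) else 0 := by
  obtain ⟨k, a, b, rfl⟩ := exists_eq_smul_intVec hR
  have hreach := reflTransGen_single_of_normSqInt_eq_two_pow j k a b (normSqInt_eq_two_pow hunit)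
  obtain ⟨L, hL, hLv⟩ := hreach.exists_list_prod_mulVec
  exact ⟨L, hL, hLv.trans (funext fun i => Pi.single_apply j 1 i)⟩

/-- Every unit vector over `ℤ[1/(i√2)]` can be reduced to any standard basis
vector `e_j` by generators `(-1)_[a]`, `X_[a,b]`, `F_[a,b]`. -/
theorem stmt17 (n : ℕ) (hn : 1 ≤ n) (j : Fin n) (v : Fin n → ℂ)
    (hunit : ∑ k, (starRingEnd ℂ) (v k) * v k = 1)
    (hR : ∀ k, InDIrt2 (v k)) :
    ∃ L : List (Matrix (Fin n) (Fin n) ℂ),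
      (∀ G ∈ L, IsImGen G) ∧
      L.prod.mulVec v = fun k => if k = j then (1 : ℂ) else 0 :=
  stmt17_general n j v hunit hR
end
end

section
/- If u₁, u₂ ∈ ℤ[i] satisfy u₁² ≡ 1 (mod 2) and u₂² ≡ 1 (mod 2) in ℤ[i], then there exist m₁, m₂ ∈ ℕ such that ωH · (i^{m₁}u₁, i^{m₂}u₂)ᵀ = (u₁', u₂')ᵀ for some u₁', u₂' ∈ ℤ[i] with u₁' ≡ u₂' ≡ 0 (mod 1+i), i.e. u₁', u₂' ∈ (1+i)·ℤ[i]. -/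
open Matrix Complex

noncomputable section

/-- The gate `ωH = ((1+i)/2)[[1,1],[1,-1]]`, where `ω = e^{iπ/4}`. -/
def omegaHmat : Matrix (Fin 2) (Fin 2) ℂ :=
  ((1 + Complex.I) / 2) • !![1, 1; 1, -1]

/-- `x` belongs to the ring of Gaussian integers `ℤ[i] = {a + b·i : a, b ∈ ℤ}`. -/
def InZi (x : ℂ) : Prop := ∃ a b : ℤ, x = (a : ℂ) + (b : ℂ) * Complex.I

lemma intCast_complex_ext18 {a b c d : ℤ}
    (h : (a:ℂ) + (b:ℂ) * Complex.I = (c:ℂ) + (d:ℂ) * Complex.I) : a = c ∧ b = d := by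
  have hre := congrArg Complex.re h
  have him := congrArg Complex.im h
  simp at hre him
  exact ⟨by exact_mod_cast hre, by exact_mod_cast him⟩

lemma odd_of_cong18 (a b : ℤ) (t : ℂ) (ht : InZi t)
    (h : ((a:ℂ)+(b:ℂ)*Complex.I)^2 - 1 = 2 * t) : Odd (a + b) := by
  obtain ⟨c, d, rfl⟩ := ht
  have h' : ((a^2 - b^2 - 1 : ℤ):ℂ) + ((2*a*b : ℤ):ℂ) * Complex.I
      = ((2*c : ℤ):ℂ) + ((2*d : ℤ):ℂ) * Complex.I := by
    push_cast
    linear_combination h - (b:ℂ)^2*Complex.I_sq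
  have h2 : a^2 - b^2 - 1 = 2*c := (intCast_complex_ext18 h').1
  have hodd : Odd ((a+b)*(a-b)) := ⟨c, by linarith [sq_nonneg a, h2, (by ring : (a+b)*(a-b) = a^2 - b^2)]⟩
  exact (Int.odd_mul.mp hodd).1

lemma rotate18 (a b : ℤ) (h : Odd (a + b)) :
    ∃ (m : ℕ) (a' b' : ℤ), Odd a' ∧ Even b' ∧
      Complex.I ^ m * ((a:ℂ)+(b:ℂ)*Complex.I) = (a':ℂ)+(b':ℂ)*Complex.I := by
  rcases Int.even_or_odd a with ha | ha
  · have hb : Odd b := by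
      rcases Int.even_or_odd b with hb | hb
      · exact absurd (Even.add ha hb) (Int.not_even_iff_odd.mpr h)
      · exact hb
    refine ⟨1, -b, a, hb.neg, ha, ?_⟩
    push_cast
    linear_combination (b:ℂ) * Complex.I_sq
  · have hb : Even b := by
      rcases Int.even_or_odd b with hb | hb
      · exact hb
      · exact absurd (Odd.add_odd ha hb) (Int.not_even_iff_odd.mpr h)
    exact ⟨0, a, b, ha, hb, by simp⟩

/-- If `u₁, u₂ ∈ ℤ[i]` satisfy `u² ≡ 1 (mod 2)`, then after multiplying each
by a suitable power of `i`, the matrix `ωH` maps `(u₁, u₂)ᵀ` to a vector with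
both entries divisible by `1 + i` in `ℤ[i]`. -/
theorem stmt18 (u₁ u₂ : ℂ) (h₁ : InZi u₁) (h₂ : InZi u₂)
    (hc₁ : ∃ t : ℂ, InZi t ∧ u₁ ^ 2 - 1 = 2 * t)
    (hc₂ : ∃ t : ℂ, InZi t ∧ u₂ ^ 2 - 1 = 2 * t) :
    ∃ (m₁ m₂ : ℕ) (u₁' u₂' : ℂ),
      (∃ t : ℂ, InZi t ∧ u₁' = (1 + Complex.I) * t) ∧
      (∃ t : ℂ, InZi t ∧ u₂' = (1 + Complex.I) * t) ∧
      omegaHmat.mulVec ![Complex.I ^ m₁ * u₁, Complex.I ^ m₂ * u₂] = ![u₁', u₂'] := by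
  obtain ⟨a₁, b₁, rfl⟩ := h₁
  obtain ⟨a₂, b₂, rfl⟩ := h₂
  obtain ⟨t₁, ht₁, he₁⟩ := hc₁
  obtain ⟨t₂, ht₂, he₂⟩ := hc₂
  have ho₁ := odd_of_cong18 a₁ b₁ t₁ ht₁ he₁
  have ho₂ := odd_of_cong18 a₂ b₂ t₂ ht₂ he₂
  obtain ⟨m₁, a₁', b₁', ha₁', hb₁', hr₁⟩ := rotate18 a₁ b₁ ho₁
  obtain ⟨m₂, a₂', b₂', ha₂', hb₂', hr₂⟩ := rotate18 a₂ b₂ ho₂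
  obtain ⟨p, hp⟩ : Even (a₁' + a₂') := ha₁'.add_odd ha₂'
  obtain ⟨q, hq⟩ : Even (b₁' + b₂') := hb₁'.add hb₂'
  obtain ⟨r, hr⟩ : Even (a₁' - a₂') := ha₁'.sub_odd ha₂'
  obtain ⟨s, hs⟩ : Even (b₁' - b₂') := hb₁'.sub hb₂'
  have hpC : (a₁':ℂ) + (a₂':ℂ) = 2*(p:ℂ) := by exact_mod_cast congrArg (Int.cast : ℤ → ℂ) (by linarith [hp] : a₁' + a₂' = 2*p)
  have hqC : (b₁':ℂ) + (b₂':ℂ) = 2*(q:ℂ) := by exact_mod_cast congrArg (Int.cast : ℤ → ℂ) (by linarith [hq] : b₁' + b₂' = 2*q)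
  have hrC : (a₁':ℂ) - (a₂':ℂ) = 2*(r:ℂ) := by exact_mod_cast congrArg (Int.cast : ℤ → ℂ) (by linarith [hr] : a₁' - a₂' = 2*r)
  have hsC : (b₁':ℂ) - (b₂':ℂ) = 2*(s:ℂ) := by exact_mod_cast congrArg (Int.cast : ℤ → ℂ) (by linarith [hs] : b₁' - b₂' = 2*s)
  refine ⟨m₁, m₂, (1 + Complex.I) * ((p:ℂ) + (q:ℂ)*Complex.I),
      (1 + Complex.I) * ((r:ℂ) + (s:ℂ)*Complex.I),
      ⟨_, ⟨p, q, rfl⟩, rfl⟩, ⟨_, ⟨r, s, rfl⟩, rfl⟩, ?_⟩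
  funext i
  fin_cases i <;>
    simp [omegaHmat, mulVec, dotProduct, Fin.sum_univ_two]
  · linear_combination ((1+Complex.I)/2) * hr₁ + ((1+Complex.I)/2) * hr₂ +
      ((1+Complex.I)/2) * hpC + ((1+Complex.I)*Complex.I/2) * hqC
  · linear_combination ((1+Complex.I)/2) * hr₁ - ((1+Complex.I)/2) * hr₂ +
      ((1+Complex.I)/2) * hrC + ((1+Complex.I)*Complex.I/2) * hsC
end
end
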